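/- Let f(x,y,z) = x·(2y² − x), g(x,y,z) = −x²·y + x²·z + y³, h(x,y,z) = −z·(2xy − 2xz − y)·y and S(x,y,z) = −z/y. Then at every point of ℝ³ with y ≠ 0 and x·(2y² − x) ≠ 0: f·∂S/∂x + g·∂S/∂y + h·∂S/∂z = S²·(f·∂g/∂z − g·∂f/∂z)/f + S·(g·∂f/∂y + f·∂h/∂z − f·∂g/∂y − h·∂f/∂z)/f − (f·∂h/∂y − h·∂f/∂y)/f. -/

import Mathlib

/-! Each partial derivative is a one-variable derivative along a coordinate line. Once they are
substituted, clearing the denominators `y` and `f` turns the equation into a polynomial identity. -/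

/-- Partial derivative in the `x` direction of a function on `ℝ³`. -/
noncomputable def pdX (F : ℝ × ℝ × ℝ → ℝ) (p : ℝ × ℝ × ℝ) : ℝ :=
  fderiv ℝ F p (1, 0, 0)

/-- Partial derivative in the `y` direction. -/
noncomputable def pdY (F : ℝ × ℝ × ℝ → ℝ) (p : ℝ × ℝ × ℝ) : ℝ :=
  fderiv ℝ F p (0, 1, 0)

/-- Partial derivative in the `z` direction. -/
noncomputable def pdZ (F : ℝ × ℝ × ℝ → ℝ) (p : ℝ × ℝ × ℝ) : ℝ :=
  fderiv ℝ F p (0, 0, 1)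

/-- `f(x,y,z) = x·(2y² − x)`, with `p = (x, y, z)`. -/
def fS : ℝ × ℝ × ℝ → ℝ := fun p => p.1 * (2 * p.2.1 ^ 2 - p.1)

/-- `g(x,y,z) = −x²·y + x²·z + y³`. -/
def gS : ℝ × ℝ × ℝ → ℝ := fun p => -p.1 ^ 2 * p.2.1 + p.1 ^ 2 * p.2.2 + p.2.1 ^ 3

/-- `h(x,y,z) = −z·(2xy − 2xz − y)·y`. -/
def hS : ℝ × ℝ × ℝ → ℝ := fun p =>
  -p.2.2 * (2 * p.1 * p.2.1 - 2 * p.1 * p.2.2 - p.2.1) * p.2.1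

/-- The S-function `S(x,y,z) = −z/y`. -/
noncomputable def SS : ℝ × ℝ × ℝ → ℝ := fun p => -p.2.2 / p.2.1

theorem pdX_eq_deriv {F : ℝ × ℝ × ℝ → ℝ} {p : ℝ × ℝ × ℝ} (hF : DifferentiableAt ℝ F p) :
    pdX F p = deriv (fun x => F (x, p.2.1, p.2.2)) p.1 :=
  (hF.hasFDerivAt.comp_hasDerivAt_of_eq p.1
    ((hasDerivAt_id _).prodMk (hasDerivAt_const _ _)) rfl).deriv.symm

theorem pdY_eq_deriv {F : ℝ × ℝ × ℝ → ℝ} {p : ℝ × ℝ × ℝ} (hF : DifferentiableAt ℝ F p) :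
    pdY F p = deriv (fun y => F (p.1, y, p.2.2)) p.2.1 :=
  (hF.hasFDerivAt.comp_hasDerivAt_of_eq p.2.1
    ((hasDerivAt_const _ _).prodMk ((hasDerivAt_id _).prodMk (hasDerivAt_const _ _))) rfl).deriv.symm

theorem pdZ_eq_deriv {F : ℝ × ℝ × ℝ → ℝ} {p : ℝ × ℝ × ℝ} (hF : DifferentiableAt ℝ F p) :
    pdZ F p = deriv (fun z => F (p.1, p.2.1, z)) p.2.2 :=
  (hF.hasFDerivAt.comp_hasDerivAt_of_eq p.2.2
    ((hasDerivAt_const _ _).prodMk ((hasDerivAt_const _ _).prodMk (hasDerivAt_id _))) rfl).deriv.symm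

theorem differentiable_fS : Differentiable ℝ fS := by
  unfold fS; fun_prop

theorem differentiable_gS : Differentiable ℝ gS := by
  unfold gS; fun_prop

theorem differentiable_hS : Differentiable ℝ hS := by
  unfold hS; fun_prop

theorem differentiableAt_SS {p : ℝ × ℝ × ℝ} (hy : p.2.1 ≠ 0) : DifferentiableAt ℝ SS p := by
  unfold SS; fun_prop (disch := exact hy)

theorem pdY_fS (p : ℝ × ℝ × ℝ) : pdY fS p = 4 * p.1 * p.2.1 := by
  rw [pdY_eq_deriv (differentiable_fS p)]
  simp (disch := fun_prop) [fS]
  ring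

theorem pdZ_fS (p : ℝ × ℝ × ℝ) : pdZ fS p = 0 := by
  rw [pdZ_eq_deriv (differentiable_fS p)]
  simp [fS]

theorem pdY_gS (p : ℝ × ℝ × ℝ) : pdY gS p = -p.1 ^ 2 + 3 * p.2.1 ^ 2 := by
  rw [pdY_eq_deriv (differentiable_gS p)]
  simp (disch := fun_prop) [gS]

theorem pdZ_gS (p : ℝ × ℝ × ℝ) : pdZ gS p = p.1 ^ 2 := by
  rw [pdZ_eq_deriv (differentiable_gS p)]
  simp (disch := fun_prop) [gS]

theorem pdY_hS (p : ℝ × ℝ × ℝ) :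
    pdY hS p = -p.2.2 * (2 * p.1 * p.2.1 - 2 * p.1 * p.2.2 - p.2.1)
      - p.2.2 * p.2.1 * (2 * p.1 - 1) := by
  rw [pdY_eq_deriv (differentiable_hS p)]
  simp (disch := fun_prop) [hS]
  ring

theorem pdZ_hS (p : ℝ × ℝ × ℝ) :
    pdZ hS p = -p.2.1 * (2 * p.1 * p.2.1 - 2 * p.1 * p.2.2 - p.2.1) + 2 * p.1 * p.2.1 * p.2.2 := by
  rw [pdZ_eq_deriv (differentiable_hS p)]
  simp (disch := fun_prop) [hS]
  ring

theorem pdX_SS {p : ℝ × ℝ × ℝ} (hy : p.2.1 ≠ 0) : pdX SS p = 0 := by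
  rw [pdX_eq_deriv (differentiableAt_SS hy)]
  simp [SS]

theorem pdY_SS {p : ℝ × ℝ × ℝ} (hy : p.2.1 ≠ 0) : pdY SS p = p.2.2 / p.2.1 ^ 2 := by
  rw [pdY_eq_deriv (differentiableAt_SS hy)]
  simp [SS, div_eq_mul_inv]

theorem pdZ_SS {p : ℝ × ℝ × ℝ} (hy : p.2.1 ≠ 0) : pdZ SS p = -1 / p.2.1 := by
  rw [pdZ_eq_deriv (differentiableAt_SS hy)]
  simp [SS, div_eq_mul_inv]

theorem S_function_riccati_explicit :
    ∀ p : ℝ × ℝ × ℝ, p.2.1 ≠ 0 → p.1 * (2 * p.2.1 ^ 2 - p.1) ≠ 0 →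
      fS p * pdX SS p + gS p * pdY SS p + hS p * pdZ SS p =
        (SS p) ^ 2 * (fS p * pdZ gS p - gS p * pdZ fS p) / fS p
          + SS p * (gS p * pdY fS p + fS p * pdZ hS p - fS p * pdY gS p
              - hS p * pdZ fS p) / fS p
          - (fS p * pdY hS p - hS p * pdY fS p) / fS p := by
  intro p hy hf
  rw [pdX_SS hy, pdY_SS hy, pdZ_SS hy, pdY_fS, pdZ_fS, pdY_gS, pdZ_gS, pdY_hS, pdZ_hS]
  obtain ⟨x, y, z⟩ := p
  obtain ⟨hx, hxy⟩ := mul_ne_zero_iff.mp hf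
  simp only [fS, gS, hS, SS] at hy ⊢
  field_simp
  ring
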